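/- Under the N-fold Darboux recursion, for every (x, t) ∈ ℝ² and every ζ ∈ ℂ outside {ζ₁, …, ζ_N, ζ₁*, …, ζ_N*}, one has T_N(ζ)·(T_N(ζ*))† = I; that is, (T_N(ζ*))† is the inverse of T_N(ζ). -/
import Mathlib


open Matrix Filter Topology

noncomputable section

/-- Partial derivative in the first (space) variable. -/
def dX (f : ℝ × ℝ → ℂ) : ℝ × ℝ → ℂ := fun p => deriv (fun x => f (x, p.2)) p.1

/-- Partial derivative in the second (time) variable. -/
def dT (f : ℝ × ℝ → ℂ) : ℝ × ℝ → ℂ := fun p => deriv (fun t => f (p.1, t)) p.2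

/-- Left-hand side of one component of the vcmKdV equation
`f_t + f_xxx + 3((q†q) f_x + (q†q_x) f)` for `q = (u,v,w)ᵀ`. -/
def vcmLHS (u v w f : ℝ × ℝ → ℂ) (p : ℝ × ℝ) : ℂ :=
  dT f p + dX (dX (dX f)) p
    + 3 * (((starRingEnd ℂ) (u p) * u p + (starRingEnd ℂ) (v p) * v p
            + (starRingEnd ℂ) (w p) * w p) * dX f p
         + ((starRingEnd ℂ) (u p) * dX u p + (starRingEnd ℂ) (v p) * dX v p
            + (starRingEnd ℂ) (w p) * dX w p) * f p)

/-- The vector complex modified KdV equation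
`q_t + q_xxx + 3(q_x q† q + q q† q_x) = 0` for `q = (u,v,w)ᵀ`. -/
def vcmKdVeq (u v w : ℝ × ℝ → ℂ) : Prop :=
  ∀ p : ℝ × ℝ, vcmLHS u v w u p = 0 ∧ vcmLHS u v w v p = 0 ∧ vcmLHS u v w w p = 0

/-- `J = diag(1, -1, -1, -1)`. -/
def Jmat : Matrix (Fin 4) (Fin 4) ℂ := Matrix.diagonal ![1, -1, -1, -1]

/-- The potential matrix `Q` built from the entries `u, v, w`. -/
def Qmat (u v w : ℂ) : Matrix (Fin 4) (Fin 4) ℂ :=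
  !![0, u, v, w;
     -((starRingEnd ℂ) u), 0, 0, 0;
     -((starRingEnd ℂ) v), 0, 0, 0;
     -((starRingEnd ℂ) w), 0, 0, 0]

/-- `U(ζ) = -iζJ + Q`. -/
def Umat (ζ u v w : ℂ) : Matrix (Fin 4) (Fin 4) ℂ :=
  (-Complex.I * ζ) • Jmat + Qmat u v w

/-- `V(ζ) = -4iζ³J + 4ζ²Q - 2iζ(Q² + Q_x)J + (-Q_xx + 2Q³ + Q_x Q - Q Q_x)`. -/
def Vmat (ζ u v w ux vx wx uxx vxx wxx : ℂ) : Matrix (Fin 4) (Fin 4) ℂ :=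
  (-4 * Complex.I * ζ ^ 3) • Jmat + (4 * ζ ^ 2) • Qmat u v w
    - (2 * Complex.I * ζ) • ((Qmat u v w ^ 2 + Qmat ux vx wx) * Jmat)
    + (-Qmat uxx vxx wxx + 2 * Qmat u v w ^ 3
        + Qmat ux vx wx * Qmat u v w - Qmat u v w * Qmat ux vx wx)

/-- `U(ζ)` as a matrix-valued field on `ℝ²`. -/
def Ufield (u v w : ℝ × ℝ → ℂ) (ζ : ℂ) (p : ℝ × ℝ) : Matrix (Fin 4) (Fin 4) ℂ :=
  Umat ζ (u p) (v p) (w p)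

/-- `V(ζ)` as a matrix-valued field on `ℝ²` (with `Q_x`, `Q_xx` the entrywise derivatives). -/
def Vfield (u v w : ℝ × ℝ → ℂ) (ζ : ℂ) (p : ℝ × ℝ) : Matrix (Fin 4) (Fin 4) ℂ :=
  Vmat ζ (u p) (v p) (w p) (dX u p) (dX v p) (dX w p)
    (dX (dX u) p) (dX (dX v) p) (dX (dX w) p)

/-- Entrywise `x`-derivative of a matrix-valued field. -/
def dXM (F : ℝ × ℝ → Matrix (Fin 4) (Fin 4) ℂ) (p : ℝ × ℝ) : Matrix (Fin 4) (Fin 4) ℂ :=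
  Matrix.of fun i j => deriv (fun x => F (x, p.2) i j) p.1

/-- Entrywise `t`-derivative of a matrix-valued field. -/
def dTM (F : ℝ × ℝ → Matrix (Fin 4) (Fin 4) ℂ) (p : ℝ × ℝ) : Matrix (Fin 4) (Fin 4) ℂ :=
  Matrix.of fun i j => deriv (fun t => F (p.1, t) i j) p.2

/-- `Ψ` solves the Lax pair `Ψ_x = U(ζ)Ψ`, `Ψ_t = V(ζ)Ψ` with potentials `(u,v,w)`. -/
def SolvesLax (u v w : ℝ × ℝ → ℂ) (ζ : ℂ) (Ψ : ℝ × ℝ → Fin 4 → ℂ) : Prop :=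
  ∀ p : ℝ × ℝ,
    HasDerivAt (fun x => Ψ (x, p.2)) ((Ufield u v w ζ p).mulVec (Ψ p)) p.1 ∧
    HasDerivAt (fun t => Ψ (p.1, t)) ((Vfield u v w ζ p).mulVec (Ψ p)) p.2

/-- The rank-one projection `ψψ†/(ψ†ψ)`. -/
def projOf (ψ : Fin 4 → ℂ) : Matrix (Fin 4) (Fin 4) ℂ :=
  (star ψ ⬝ᵥ ψ)⁻¹ • vecMulVec ψ (star ψ)

/-- One-fold Darboux matrix `T(ζ) = I - ((ζ₁ - ζ₁*)/(ζ - ζ₁*)) ψψ†/(ψ†ψ)`. -/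
def Tone (ζ₁ ζ : ℂ) (ψ : Fin 4 → ℂ) : Matrix (Fin 4) (Fin 4) ℂ :=
  1 - ((ζ₁ - (starRingEnd ℂ) ζ₁) / (ζ - (starRingEnd ℂ) ζ₁)) • projOf ψ

/-- Transformed potential `f - 2i(ζ₁ - ζ₁*) Ψ₁⁰ (Ψ₁ʲ)* / (Ψ₁†Ψ₁)` of the one-fold DT. -/
def u1of (f : ℝ × ℝ → ℂ) (ζ₁ : ℂ) (Ψ₁ : ℝ × ℝ → Fin 4 → ℂ) (j : Fin 4) : ℝ × ℝ → ℂ :=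
  fun p => f p - 2 * Complex.I * (ζ₁ - (starRingEnd ℂ) ζ₁) * Ψ₁ p 0
      * (starRingEnd ℂ) (Ψ₁ p j) / (star (Ψ₁ p) ⬝ᵥ Ψ₁ p)

/-- The iterated eigenfunctions `Ψ_i^{(k)}` of the `N`-fold Darboux recursion
(0-based indexing: `PsiIter ζs Ψs k i = Ψ_{i+1}^{(k)}`). -/
def PsiIter (ζs : ℕ → ℂ) (Ψs : ℕ → ℝ × ℝ → Fin 4 → ℂ) : ℕ → ℕ → ℝ × ℝ → Fin 4 → ℂ
  | 0, i => Ψs i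
  | k + 1, i => fun p =>
      (Tone (ζs k) (ζs i) (PsiIter ζs Ψs k k p)).mulVec (PsiIter ζs Ψs k i p)

/-- The product `T_N(ζ) = T[N](ζ) ⋯ T[1](ζ)` of the `N`-fold Darboux recursion. -/
def TNmat (ζs : ℕ → ℂ) (Ψs : ℕ → ℝ × ℝ → Fin 4 → ℂ) :
    ℕ → ℂ → ℝ × ℝ → Matrix (Fin 4) (Fin 4) ℂ
  | 0, _, _ => 1
  | k + 1, ζ, p => Tone (ζs k) ζ (PsiIter ζs Ψs k k p) * TNmat ζs Ψs k ζ p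

/-- The explicit eigenfunction of the Lax pair for the zero seed at eigenvalue `ζk`. -/
def seedPsi (ζk : ℂ) (c₁ c₂ c₃ : ℝ) (p : ℝ × ℝ) : Fin 4 → ℂ :=
  ![Complex.exp (-Complex.I * ζk * (4 * p.2 * ζk ^ 2 + p.1)),
    c₁ * Complex.exp (Complex.I * ζk * (4 * p.2 * ζk ^ 2 + p.1)),
    c₂ * Complex.exp (Complex.I * ζk * (4 * p.2 * ζk ^ 2 + p.1)),
    c₃ * Complex.exp (Complex.I * ζk * (4 * p.2 * ζk ^ 2 + p.1))]

/-- The `N×N` matrix `M` with entries `M_{jk} = Ψ_j†Ψ_k/(ζ_k - ζ_j*)`. -/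
def MmatOf {N : ℕ} (ζs : Fin N → ℂ) (Ψs : Fin N → ℝ × ℝ → Fin 4 → ℂ) (p : ℝ × ℝ) :
    Matrix (Fin N) (Fin N) ℂ :=
  Matrix.of fun j k => (star (Ψs j p) ⬝ᵥ Ψs k p) / (ζs k - (starRingEnd ℂ) (ζs j))

/-- The `4×N` matrix `X = (Ψ₁, …, Ψ_N)` whose columns are the eigenfunctions. -/
def XmatOf {N : ℕ} (Ψs : Fin N → ℝ × ℝ → Fin 4 → ℂ) (p : ℝ × ℝ) :
    Matrix (Fin 4) (Fin N) ℂ :=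
  Matrix.of fun a j => Ψs j p a

/-- `M` bordered on the right by the column `c` and at the bottom by the row `(r, 0)`. -/
def bordered {N : ℕ} (M : Matrix (Fin N) (Fin N) ℂ) (c r : Fin N → ℂ) :
    Matrix (Fin (N + 1)) (Fin (N + 1)) ℂ :=
  Matrix.of fun i j =>
    Fin.lastCases
      (Fin.lastCases (0 : ℂ) (fun j' => r j') j)
      (fun i' => Fin.lastCases (c i') (fun j' => M i' j') j)
      i


open scoped ComplexOrder in
lemma dot_self_ne {ψ : Fin 4 → ℂ} (h : ψ ≠ 0) : star ψ ⬝ᵥ ψ ≠ 0 :=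
  fun hc => h (dotProduct_star_self_eq_zero.mp hc)

lemma conj_dot_self (ψ : Fin 4 → ℂ) : (starRingEnd ℂ) (star ψ ⬝ᵥ ψ) = star ψ ⬝ᵥ ψ := by
  simp [dotProduct, map_sum, mul_comm]

lemma projOf_herm (ψ : Fin 4 → ℂ) : (projOf ψ)ᴴ = projOf ψ := by
  unfold projOf
  rw [conjTranspose_smul]
  congr 1
  · show (starRingEnd ℂ) ((star ψ ⬝ᵥ ψ)⁻¹) = (star ψ ⬝ᵥ ψ)⁻¹
    rw [map_inv₀, conj_dot_self]
  · ext i j; simp [vecMulVec_apply, conjTranspose_apply, mul_comm]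

lemma projOf_idem {ψ : Fin 4 → ℂ} (h : ψ ≠ 0) : projOf ψ * projOf ψ = projOf ψ := by
  unfold projOf
  have hA : vecMulVec ψ (star ψ) * vecMulVec ψ (star ψ)
      = (star ψ ⬝ᵥ ψ) • vecMulVec ψ (star ψ) := by
    ext i j
    simp [vecMulVec_apply, mul_apply, dotProduct, Finset.mul_sum, Finset.sum_mul]
    congr 1; ext k; ring
  rw [Matrix.smul_mul, Matrix.mul_smul, hA, smul_smul, smul_smul]
  congr 1
  field_simp [dot_self_ne h]

lemma one_sub_smul_mul {a c : ℂ} {P : Matrix (Fin 4) (Fin 4) ℂ} (hPP : P * P = P)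
    (key : a + c - a * c = 0) : (1 - a • P) * (1 - c • P) = 1 := by
  simp only [mul_sub, sub_mul, mul_one, one_mul, Matrix.smul_mul, Matrix.mul_smul,
    smul_smul, hPP]
  have key2 : a * c - a - c = 0 := by linear_combination -key
  linear_combination (norm := module) key2 • P

lemma Tone_unitary {ζ₁ ζ : ℂ} {ψ : Fin 4 → ℂ} (hψ : ψ ≠ 0)
    (h1 : ζ ≠ ζ₁) (h2 : ζ ≠ (starRingEnd ℂ) ζ₁) :
    Tone ζ₁ ζ ψ * (Tone ζ₁ ((starRingEnd ℂ) ζ) ψ)ᴴ = 1 := by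
  set ζ₁' := (starRingEnd ℂ) ζ₁ with hz
  set P := projOf ψ with hP
  set a := (ζ₁ - ζ₁') / (ζ - ζ₁') with ha
  have hTH : (Tone ζ₁ ((starRingEnd ℂ) ζ) ψ)ᴴ
      = 1 - ((starRingEnd ℂ) ((ζ₁ - ζ₁') / ((starRingEnd ℂ) ζ - ζ₁'))) • P := by
    unfold Tone
    rw [conjTranspose_sub, conjTranspose_one, conjTranspose_smul, projOf_herm]
    rfl
  have hc : (starRingEnd ℂ) ((ζ₁ - ζ₁') / ((starRingEnd ℂ) ζ - ζ₁'))
      = (ζ₁' - ζ₁) / (ζ - ζ₁) := by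
    rw [map_div₀, map_sub, map_sub]
    simp [hz]
  rw [hTH, hc]
  set c := (ζ₁' - ζ₁) / (ζ - ζ₁) with hcc
  have hzd1 : ζ - ζ₁' ≠ 0 := sub_ne_zero.mpr h2
  have hzd2 : ζ - ζ₁ ≠ 0 := sub_ne_zero.mpr h1
  have key : a + c - a * c = 0 := by
    rw [ha, hcc, div_add_div _ _ hzd1 hzd2, div_mul_div_comm, ← sub_div, div_eq_zero_iff]
    left; ring
  exact one_sub_smul_mul (projOf_idem hψ) key

lemma TN_unitary_aux (ζs : ℕ → ℂ) (Ψs : ℕ → ℝ × ℝ → Fin 4 → ℂ) (N : ℕ)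
    (hiter : ∀ k, k < N → ∀ p : ℝ × ℝ, PsiIter ζs Ψs k k p ≠ 0) :
    ∀ (p : ℝ × ℝ) (ζ : ℂ),
      (∀ i, i < N → ζ ≠ ζs i ∧ ζ ≠ (starRingEnd ℂ) (ζs i)) →
      TNmat ζs Ψs N ζ p * (TNmat ζs Ψs N ((starRingEnd ℂ) ζ) p)ᴴ = 1 := by
  induction N with
  | zero =>
    intro p ζ _
    show (1 : Matrix (Fin 4) (Fin 4) ℂ) * (1 : Matrix (Fin 4) (Fin 4) ℂ)ᴴ = 1
    rw [conjTranspose_one, one_mul]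
  | succ n ih =>
    intro p ζ hζ
    have hih := ih (fun k hk => hiter k (Nat.lt_succ_of_lt hk)) p ζ
      (fun i hi => hζ i (Nat.lt_succ_of_lt hi))
    have hTone := Tone_unitary (hiter n (Nat.lt_succ_self n) p)
      (hζ n (Nat.lt_succ_self n)).1 (hζ n (Nat.lt_succ_self n)).2
    show Tone (ζs n) ζ (PsiIter ζs Ψs n n p) * TNmat ζs Ψs n ζ p *
        (Tone (ζs n) ((starRingEnd ℂ) ζ) (PsiIter ζs Ψs n n p) *
          TNmat ζs Ψs n ((starRingEnd ℂ) ζ) p)ᴴ = 1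
    rw [conjTranspose_mul, mul_assoc, ← mul_assoc (TNmat ζs Ψs n ζ p), hih, one_mul, hTone]

/-- `T_N(ζ)·(T_N(ζ*))† = I` for `ζ` outside
`{ζ₁, …, ζ_N, ζ₁*, …, ζ_N*}`. -/
theorem TN_inverse (N : ℕ) (ζs : ℕ → ℂ) (Ψs : ℕ → ℝ × ℝ → Fin 4 → ℂ)
    (u v w : ℝ × ℝ → ℂ)
    (hu : ContDiff ℝ (⊤ : ℕ∞) u) (hv : ContDiff ℝ (⊤ : ℕ∞) v)
    (hw : ContDiff ℝ (⊤ : ℕ∞) w) (hsol : vcmKdVeq u v w)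
    (hdist : ∀ i j, i < N → j < N → i ≠ j → ζs i ≠ ζs j)
    (hnc : ∀ i j, i < N → j < N → ζs i ≠ (starRingEnd ℂ) (ζs j))
    (hlax : ∀ i, i < N → SolvesLax u v w (ζs i) (Ψs i))
    (hnz : ∀ i, i < N → ∀ p : ℝ × ℝ, Ψs i p ≠ 0)
    (hiter : ∀ k, k < N → ∀ p : ℝ × ℝ, PsiIter ζs Ψs k k p ≠ 0) :
    ∀ (p : ℝ × ℝ) (ζ : ℂ),
      (∀ i, i < N → ζ ≠ ζs i ∧ ζ ≠ (starRingEnd ℂ) (ζs i)) →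
      TNmat ζs Ψs N ζ p * (TNmat ζs Ψs N ((starRingEnd ℂ) ζ) p)ᴴ = 1 := by
  exact TN_unitary_aux ζs Ψs N hiter

end
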